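/- arXiv:1708.00639 — 3 statements merged into one kernel-verified Lean document; each statement's English description precedes it below -/
import Mathlib

section
/- For every n₀ there exists n ≥ n₀ and a word w of length n over {a, b} such that the number of distinct squares occurring in the circular word (w) is at least 1.25·n - C for an absolute constant C. -/
/-- `p` is a period of `w`: `p ≥ 1` and `w[i] = w[i+p]` for all valid indices. -/
def IsPeriod {α : Type*} (w : List α) (p : ℕ) : Prop :=
  1 ≤ p ∧ ∀ i, i + p < w.length → w[i]? = w[i + p]?

/-- The smallest period of `w`. -/
noncomputable def minPeriod {α : Type*} (w : List α) : ℕ :=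
  sInf {p | IsPeriod w p}

/-- `w` is periodic if its smallest period is at most `|w|/2`. -/
def Periodic {α : Type*} (w : List α) : Prop :=
  2 * minPeriod w ≤ w.length

/-- `w` is aperiodic if its smallest period exceeds `|w|/2`. -/
def Aperiodic {α : Type*} (w : List α) : Prop :=
  w.length < 2 * minPeriod w

/-- Cyclic rotation of `w` by `i`. -/
def rot {α : Type*} (w : List α) (i : ℕ) : List α :=
  w.drop i ++ w.take i

/-- A square is a nonempty word of the form `u ++ u`. -/
def IsSq {α : Type*} (s : List α) : Prop :=
  ∃ u : List α, u ≠ [] ∧ s = u ++ u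

/-- `p`-fold concatenation of the word `y`. -/
def listPow {α : Type*} (y : List α) (p : ℕ) : List α :=
  (List.replicate p y).flatten

/-- A word is primitive if it is not a `p`-th power with `p ≥ 2`. -/
def Primitive {α : Type*} (w : List α) : Prop :=
  ¬ ∃ (y : List α) (p : ℕ), 2 ≤ p ∧ w = listPow y p

/-- The set of distinct squares occurring in the circular word `(w)`. -/
def cyclicSquares {α : Type*} (w : List α) : Set (List α) :=
  {s | IsSq s ∧ ∃ i < w.length, s <:+: rot w i}

/-- `s` occurs in `x` starting at (0-indexed) position `i`. -/
def occursAt {α : Type*} (s x : List α) (i : ℕ) : Prop :=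
  (x.drop i).take s.length = s

/-- The rightmost occurrence of `s` in `x` starts at (0-indexed) position `i`. -/
def rightmostStartsAt {α : Type*} (s x : List α) (i : ℕ) : Prop :=
  occursAt s x i ∧ ∀ j, occursAt s x j → j ≤ i

/-- `w[i..j]` with 1-indexed inclusive bounds. -/
def oneSlice {α : Type*} (w : List α) (i j : ℕ) : List α :=
  (w.drop (i - 1)).take (j - i + 1)

/-- The letters `a` and `b` of the two-letter alphabet. -/
def la : Bool := false
def lb : Bool := true

/-- The word `(ba)^m`. -/
def baPow (m : ℕ) : List Bool := (List.replicate m [lb, la]).flatten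

/-- The word `(ab)^m`. -/
def abPow (m : ℕ) : List Bool := (List.replicate m [la, lb]).flatten

/-- `x_k = a (ba)^{k+1} a (ba)^{k+2}`. -/
def xWord (k : ℕ) : List Bool := [la] ++ baPow (k + 1) ++ [la] ++ baPow (k + 2)

/-- `f_k = a(ba)^{k+1} a(ba)^{k+2} a(ba)^{k+1} a(ba)^{k+2}`. -/
def fWord (k : ℕ) : List Bool := xWord k ++ xWord k

/-! A word `l` with `l.rotate d = l` is `(d.gcd |l|)`-periodic, hence a `|l| / d.gcd |l|`-th
power, and this exponent divides every letter count. So if two letter counts are coprime, the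
`|l|` rotations of `l` are pairwise distinct.

This applies to `x = a(ba)^{k+1}a(ba)^{k+2}` (`2k+3` letters `b`, `2k+5` letters `a`), to
`u = a(ba)^{k+1}` and to `t = a(ba)^{k+1}ab`. The squares of the `4k+8` rotations of `x` are the
rotations of `f_k = xx`; since `f_k` contains `uuu` and `tt·a(ba)^k`, it also contains the squares
of `2k+3` rotations of `u` and of `2k+2` rotations of `t`. Adding the `k+1` squares `(a(ba)^j)^2`,
`j ≤ k`, and the squares `(ab)^{2m}`, `(ba)^{2m}`, `2m ≤ k+2`, which are told apart from each
other and from the rest by their lengths and first letters, gives `10k + 15 = 1.25 |f_k| - 5`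
squares. -/

open Finset

theorem Nat.count_mul_of_periodic {p : ℕ → Prop} [DecidablePred p] {g : ℕ}
    (hp : Function.Periodic p g) (e : ℕ) : Nat.count p (g * e) = e * Nat.count p g := by
  induction e with
  | zero => simp
  | succ e ih =>
    have hshift (k : ℕ) : p (g * e + k) ↔ p k := by
      rw [add_comm, mul_comm, ← smul_eq_mul, hp.nsmul]
    simp only [mul_add_one, Nat.count_add, ih, hshift]
    ring

namespace List

variable {α : Type*}

theorem iterate_rotate_one (l : List α) (n : ℕ) : (rotate · 1)^[n] l = l.rotate n := by
  induction n with
  | zero => simp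
  | succ n ih => rw [Function.iterate_succ_apply', ih, rotate_rotate]

theorem rotate_gcd_length_eq_self {l : List α} {d : ℕ} (h : l.rotate d = l) :
    l.rotate (d.gcd l.length) = l := by
  have hd : Function.IsPeriodicPt (rotate · 1) d l := by
    rw [Function.IsPeriodicPt, Function.IsFixedPt, iterate_rotate_one, h]
  have hn : Function.IsPeriodicPt (rotate · 1) l.length l := by
    rw [Function.IsPeriodicPt, Function.IsFixedPt, iterate_rotate_one, rotate_length]
  simpa [Function.IsPeriodicPt, Function.IsFixedPt, iterate_rotate_one] using hd.gcd hn

theorem count_eq_nat_count [DecidableEq α] (l : List α) (a : α) :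
    l.count a = Nat.count (fun m => l[m]? = some a) l.length := by
  induction l with
  | nil => simp
  | cons x l ih =>
    rw [count_cons, length_cons, Nat.count_succ', ih]
    simp only [getElem?_cons_succ, getElem?_cons_zero, Option.some.injEq, beq_iff_eq]

theorem length_div_gcd_dvd_count_of_rotate_eq_self [DecidableEq α] {l : List α} {d : ℕ}
    (h : l.rotate d = l) (a : α) : l.length / d.gcd l.length ∣ l.count a := by
  set n := l.length
  set g := d.gcd n
  rcases Nat.eq_zero_or_pos n with hn | hn
  · simp [n, length_eq_zero_iff.mp hn]
  have hg := rotate_gcd_length_eq_self h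
  set p : ℕ → Prop := fun m => l[m % n]? = some a
  have hp : Function.Periodic p g := fun m => by
    have hrot : l[m % n]? = l[(m + g) % n]? := by
      rw [← Nat.mod_add_mod, ← getElem?_rotate (Nat.mod_lt m hn), hg]
    simp only [p, hrot]
  have hcount : l.count a = Nat.count p n := by
    rw [count_eq_nat_count]
    refine le_antisymm (Nat.count_mono_left fun k hk => ?_) (Nat.count_mono_left fun k hk => ?_) <;>
      simp_all [p, n, Nat.mod_eq_of_lt hk]
  obtain ⟨e, he⟩ := Nat.gcd_dvd_right d n
  have hcount_e := Nat.count_mul_of_periodic hp e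
  rw [← he] at hcount_e
  rw [hcount, hcount_e, Nat.div_eq_of_eq_mul_right (Nat.gcd_pos_of_pos_right d hn) he]
  exact dvd_mul_right e _

theorem rotate_sub_eq_self_of_rotate_eq {l : List α} {i j : ℕ} (hij : i ≤ j)
    (hi : i ≤ l.length) (h : l.rotate i = l.rotate j) : l.rotate (j - i) = l := by
  have h' := congrArg (rotate · (l.length - i)) h
  simp only [rotate_rotate] at h'
  rwa [Nat.add_sub_cancel' hi, rotate_length, show j + (l.length - i) = j - i + l.length by omega,
    ← rotate_rotate, ← length_rotate (n := j - i), rotate_length, eq_comm] at h'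

theorem injOn_rotate_of_coprime_count [DecidableEq α] {l : List α} {a b : α}
    (hab : (l.count a).Coprime (l.count b)) : Set.InjOn l.rotate (Set.Iio l.length) := by
  suffices ∀ i j, i ≤ j → j < l.length → l.rotate i = l.rotate j → i = j by
    intro i hi j hj h
    rcases le_total i j with hij | hji
    · exact this i j hij hj h
    · exact (this j i hji hi h.symm).symm
  intro i j hij hj h
  have hper := rotate_sub_eq_self_of_rotate_eq hij (by omega) h
  have hg_dvd := Nat.gcd_dvd_right (j - i) l.length
  have hquot : l.length / (j - i).gcd l.length = 1 :=
    Nat.eq_one_of_dvd_coprimes hab (length_div_gcd_dvd_count_of_rotate_eq_self hper a)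
      (length_div_gcd_dvd_count_of_rotate_eq_self hper b)
  have hlen := Nat.eq_of_dvd_of_div_eq_one hg_dvd hquot
  have := Nat.eq_zero_of_dvd_of_lt (hlen ▸ Nat.gcd_dvd_left (j - i) l.length) (by omega)
  omega

theorem exists_append_eq_of_le_length {v : List α} {i : ℕ} (hi : i ≤ v.length) :
    ∃ x y, v = x ++ y ∧ x.length = i :=
  ⟨v.take i, v.drop i, (take_append_drop i v).symm, length_take_of_le hi⟩

theorem rotate_append_rotate_infix {v : List α} {i : ℕ} (hi : i ≤ v.length) :
    v.rotate i ++ v.rotate i <:+: v ++ v ++ v.take i := by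
  obtain ⟨x, y, rfl, rfl⟩ := exists_append_eq_of_le_length hi
  rw [rotate_append_length_eq, take_left]
  exact ⟨x, [], by simp⟩

theorem rotate_append_self {l : List α} {i : ℕ} (hi : i ≤ l.length) :
    (l ++ l).rotate i = l.rotate i ++ l.rotate i := by
  obtain ⟨x, y, rfl, rfl⟩ := exists_append_eq_of_le_length hi
  rw [rotate_append_length_eq, show x ++ y ++ (x ++ y) = x ++ (y ++ x ++ y) by simp,
    rotate_append_length_eq]
  simp

theorem append_infix_append_of_isSuffix_of_isPrefix {s p a b : List α} (hs : s <:+ a)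
    (hp : p <+: b) : s ++ p <:+: a ++ b := by
  obtain ⟨a', rfl⟩ := hs
  obtain ⟨b', rfl⟩ := hp
  exact ⟨a', b', by simp⟩

end List

section CyclicSquares

variable {α : Type*}

theorem rot_eq_rotate {w : List α} {i : ℕ} (hi : i ≤ w.length) : rot w i = w.rotate i :=
  (List.rotate_eq_drop_append_take hi).symm

theorem cyclicSquares_finite (w : List α) : (cyclicSquares w).Finite := by
  refine ((Set.finite_lt_nat w.length).biUnion fun i _ => (rot w i).sublists.finite_toSet).subset ?_
  rintro s ⟨-, i, hi, hs⟩
  exact Set.mem_biUnion hi (List.mem_sublists.mpr hs.sublist)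

theorem append_self_mem_cyclicSquares {u w : List α} (hu : u ≠ []) (h : u ++ u <:+: w) :
    u ++ u ∈ cyclicSquares w := by
  have hw : 0 < w.length :=
    lt_of_lt_of_le (by simpa using List.length_pos_iff.mpr hu) h.length_le
  exact ⟨⟨u, hu, rfl⟩, 0, hw, by simpa [rot] using h⟩

theorem rotate_append_rotate_mem_cyclicSquares_append_self {v : List α} {i : ℕ}
    (hi : i < v.length) : v.rotate i ++ v.rotate i ∈ cyclicSquares (v ++ v) := by
  have hv : v.rotate i ≠ [] := by
    rw [Ne, List.rotate_eq_nil_iff, ← List.length_eq_zero_iff]; omega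
  refine ⟨⟨v.rotate i, hv, rfl⟩, i, by simp; omega, ?_⟩
  rw [rot_eq_rotate (by simp; omega), List.rotate_append_self hi.le]

theorem rotate_append_rotate_mem_cyclicSquares {v r w : List α} {i : ℕ} (hv : v ≠ [])
    (hr : r <+: v) (hi : i ≤ r.length) (h : v ++ v ++ r <:+: w) :
    v.rotate i ++ v.rotate i ∈ cyclicSquares w := by
  refine append_self_mem_cyclicSquares (by simpa [List.rotate_eq_nil_iff] using hv) ?_
  obtain ⟨q, rfl⟩ := hr
  refine (List.rotate_append_rotate_infix (by simp; omega)).trans (List.IsInfix.trans ?_ h)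
  rw [List.take_append_of_le_length hi]
  exact ((List.prefix_append_right_inj _).mpr (List.take_prefix i r)).isInfix

end CyclicSquares

section SquareFamilies

variable {α : Type*} [DecidableEq α]

def squaresOf (f : ℕ → List α) (m : ℕ) : Finset (List α) :=
  (range m).image fun i => f i ++ f i

theorem card_squaresOf {f : ℕ → List α} {m : ℕ} (hf : Set.InjOn f (Set.Iio m)) :
    #(squaresOf f m) = m := by
  rw [squaresOf, card_image_of_injOn, card_range]
  intro i hi j hj h
  have hlen : (f i).length = (f j).length := by
    have := congrArg List.length h
    simp only [List.length_append] at this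
    omega
  exact hf (by simpa using hi) (by simpa using hj) (List.append_inj h hlen).1

theorem coe_squaresOf_subset {f : ℕ → List α} {m : ℕ} {S : Set (List α)}
    (h : ∀ i < m, f i ++ f i ∈ S) : ↑(squaresOf f m) ⊆ S := by
  simpa [squaresOf, Set.image_subset_iff, Set.subset_def] using h

theorem disjoint_squaresOf {f g : ℕ → List α} {m n : ℕ}
    (h : ∀ i < m, ∀ j < n, (f i).length ≠ (g j).length) :
    Disjoint (squaresOf f m) (squaresOf g n) := by
  simp only [squaresOf, disjoint_left, mem_image, mem_range, not_exists, not_and]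
  rintro _ ⟨i, hi, rfl⟩ j hj hfg
  have := congrArg List.length hfg
  simp only [List.length_append] at this
  exact h i hi j hj (by omega)

end SquareFamilies

@[simp] theorem la_ne_lb : la ≠ lb := Bool.false_ne_true

theorem baPow_add (m n : ℕ) : baPow (m + n) = baPow m ++ baPow n := by
  rw [baPow, baPow, baPow, List.replicate_add, List.flatten_append]

theorem abPow_add (m n : ℕ) : abPow (m + n) = abPow m ++ abPow n := by
  rw [abPow, abPow, abPow, List.replicate_add, List.flatten_append]

theorem baPow_succ (m : ℕ) : baPow (m + 1) = lb :: la :: baPow m := by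
  simp [baPow, List.replicate_succ]

theorem abPow_succ (m : ℕ) : abPow (m + 1) = la :: lb :: abPow m := by
  simp [abPow, List.replicate_succ]

@[simp] theorem length_baPow (m : ℕ) : (baPow m).length = 2 * m := by simp [baPow, mul_comm]

@[simp] theorem length_abPow (m : ℕ) : (abPow m).length = 2 * m := by simp [abPow, mul_comm]

@[simp] theorem count_la_baPow (m : ℕ) : (baPow m).count la = m := by
  simp [baPow, List.count_flatten, la, lb]

@[simp] theorem count_lb_baPow (m : ℕ) : (baPow m).count lb = m := by
  simp [baPow, List.count_flatten, la, lb]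

theorem cons_la_baPow (m : ℕ) : la :: baPow m = abPow m ++ [la] := by
  induction m with
  | zero => rfl
  | succ m ih => rw [baPow_succ, abPow_succ, ih]; rfl

theorem xWord_eq_cons (k : ℕ) :
    xWord k = la :: baPow (k + 1) ++ [la, lb] ++ la :: baPow (k + 1) := by
  simp [xWord, baPow_succ (k + 1)]

theorem xWord_eq_append (k : ℕ) :
    xWord k = la :: baPow (k + 1) ++ la :: baPow (k + 1) ++ [lb, la] := by
  rw [xWord, show baPow (k + 2) = baPow (k + 1) ++ [lb, la] from baPow_add (k + 1) 1]
  simp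

@[simp] theorem length_xWord (k : ℕ) : (xWord k).length = 4 * k + 8 := by
  simp [xWord]; ring

@[simp] theorem length_fWord (k : ℕ) : (fWord k).length = 8 * k + 16 := by
  simp [fWord]; ring

theorem baPow_isPrefix {m n : ℕ} (h : m ≤ n) : baPow m <+: baPow n :=
  ⟨baPow (n - m), by rw [← baPow_add, Nat.add_sub_cancel' h]⟩

theorem baPow_isSuffix {m n : ℕ} (h : m ≤ n) : baPow m <:+ baPow n :=
  ⟨baPow (n - m), by rw [← baPow_add, Nat.sub_add_cancel h]⟩

theorem abPow_isPrefix {m n : ℕ} (h : m ≤ n) : abPow m <+: abPow n :=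
  ⟨abPow (n - m), by rw [← abPow_add, Nat.add_sub_cancel' h]⟩

theorem cube_infix_fWord (k : ℕ) :
    la :: baPow (k + 1) ++ la :: baPow (k + 1) ++ la :: baPow (k + 1) <:+: fWord k :=
  ⟨la :: baPow (k + 1) ++ [la, lb], [lb, la], by
    rw [fWord]; nth_rw 2 [xWord_eq_append]; rw [xWord_eq_cons]; simp⟩

theorem square_append_infix_fWord (k : ℕ) :
    la :: baPow (k + 1) ++ [la, lb] ++ (la :: baPow (k + 1) ++ [la, lb]) ++ la :: baPow k
      <:+: fWord k :=
  ⟨[], [la, lb] ++ la :: baPow (k + 1), by simp [fWord, xWord_eq_cons, baPow_succ k]⟩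

theorem baPow_append_cons_la_baPow_infix_fWord (k : ℕ) :
    baPow (k + 2) ++ la :: baPow (k + 1) <:+: fWord k :=
  ⟨[la] ++ baPow (k + 1) ++ [la], [la] ++ baPow (k + 2), by simp [fWord, xWord]⟩

theorem cons_la_baPow_infix_fWord (k : ℕ) : la :: baPow (k + 2) <:+: fWord k :=
  ⟨la :: baPow (k + 1), xWord k, by simp [fWord, xWord]⟩

theorem coprime_count_xWord (k : ℕ) : ((xWord k).count lb).Coprime ((xWord k).count la) := by
  have hb : (xWord k).count lb = 2 * k + 3 := by simp [xWord]; ring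
  have ha : (xWord k).count la = 2 * k + 3 + 2 := by simp [xWord]; ring
  rw [hb, ha, Nat.coprime_self_add_right, Nat.coprime_two_right]
  exact ⟨k + 1, by ring⟩

theorem squaresOf_rotate_xWord_subset (k : ℕ) :
    ↑(squaresOf (xWord k).rotate (4 * k + 8)) ⊆ cyclicSquares (fWord k) :=
  coe_squaresOf_subset fun _ hi =>
    rotate_append_rotate_mem_cyclicSquares_append_self (by rw [length_xWord]; exact hi)

theorem squaresOf_rotate_cons_la_baPow_subset (k : ℕ) :
    ↑(squaresOf (la :: baPow (k + 1)).rotate (2 * k + 3)) ⊆ cyclicSquares (fWord k) :=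
  coe_squaresOf_subset fun _ hi =>
    rotate_append_rotate_mem_cyclicSquares (List.cons_ne_nil _ _) (List.prefix_refl _)
      (by simp; omega) (cube_infix_fWord k)

theorem squaresOf_rotate_cons_la_baPow_append_subset (k : ℕ) :
    ↑(squaresOf (la :: baPow (k + 1) ++ [la, lb]).rotate (2 * k + 2)) ⊆
      cyclicSquares (fWord k) :=
  coe_squaresOf_subset fun _ hi =>
    rotate_append_rotate_mem_cyclicSquares (by simp)
      (List.cons_prefix_cons.mpr
        ⟨rfl, (baPow_isPrefix k.le_succ).trans (List.prefix_append _ _)⟩)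
      (by simp; omega) (square_append_infix_fWord k)

theorem squaresOf_cons_la_baPow_subset (k : ℕ) :
    ↑(squaresOf (fun j => la :: baPow j) (k + 1)) ⊆ cyclicSquares (fWord k) :=
  coe_squaresOf_subset fun j hj => by
    refine append_self_mem_cyclicSquares (List.cons_ne_nil _ _)
      ((List.append_infix_append_of_isSuffix_of_isPrefix ?_ ?_).trans
        (baPow_append_cons_la_baPow_infix_fWord k))
    · have h := List.suffix_cons lb (la :: baPow j)
      rw [← baPow_succ] at h
      exact h.trans (baPow_isSuffix (by omega))
    · exact List.cons_prefix_cons.mpr ⟨rfl, baPow_isPrefix (by omega)⟩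

theorem squaresOf_abPow_subset (k : ℕ) :
    ↑(squaresOf (fun j => abPow (j + 1)) ((k + 2) / 2)) ⊆ cyclicSquares (fWord k) :=
  coe_squaresOf_subset fun j hj => by
    refine append_self_mem_cyclicSquares (by simp [← List.length_pos_iff]) ?_
    rw [← abPow_add]
    refine ((abPow_isPrefix (by omega : j + 1 + (j + 1) ≤ k + 2)).trans
      (List.prefix_append _ [la])).isInfix.trans ?_
    rw [← cons_la_baPow]
    exact cons_la_baPow_infix_fWord k

theorem squaresOf_baPow_subset (k : ℕ) :
    ↑(squaresOf (fun j => baPow (j + 1)) ((k + 2) / 2)) ⊆ cyclicSquares (fWord k) :=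
  coe_squaresOf_subset fun j hj => by
    refine append_self_mem_cyclicSquares (by simp [← List.length_pos_iff]) ?_
    rw [← baPow_add]
    exact (baPow_isPrefix (by omega : j + 1 + (j + 1) ≤ k + 2)).isInfix.trans
      ((List.suffix_cons la _).isInfix.trans (cons_la_baPow_infix_fWord k))

def fWordSquares (k : ℕ) : Finset (List Bool) :=
  squaresOf (fun j => abPow (j + 1)) ((k + 2) / 2) ∪
    squaresOf (fun j => baPow (j + 1)) ((k + 2) / 2) ∪
    squaresOf (fun j => la :: baPow j) (k + 1) ∪
    squaresOf (la :: baPow (k + 1)).rotate (2 * k + 3) ∪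
    squaresOf (la :: baPow (k + 1) ++ [la, lb]).rotate (2 * k + 2) ∪
    squaresOf (xWord k).rotate (4 * k + 8)

theorem fWordSquares_subset (k : ℕ) : ↑(fWordSquares k) ⊆ cyclicSquares (fWord k) := by
  simp only [fWordSquares, coe_union, Set.union_subset_iff]
  exact ⟨⟨⟨⟨⟨squaresOf_abPow_subset k, squaresOf_baPow_subset k⟩,
    squaresOf_cons_la_baPow_subset k⟩, squaresOf_rotate_cons_la_baPow_subset k⟩,
    squaresOf_rotate_cons_la_baPow_append_subset k⟩, squaresOf_rotate_xWord_subset k⟩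

theorem card_fWordSquares (k : ℕ) : 10 * k + 15 ≤ #(fWordSquares k) := by
  have hA : #(squaresOf (xWord k).rotate (4 * k + 8)) = 4 * k + 8 :=
    card_squaresOf ((List.injOn_rotate_of_coprime_count (coprime_count_xWord k)).mono
      (Set.Iio_subset_Iio (by simp)))
  have hB : #(squaresOf (la :: baPow (k + 1)).rotate (2 * k + 3)) = 2 * k + 3 :=
    card_squaresOf ((List.injOn_rotate_of_coprime_count (a := lb) (b := la) (by simp)).mono
      (Set.Iio_subset_Iio (by simp; omega)))
  have hC : #(squaresOf (la :: baPow (k + 1) ++ [la, lb]).rotate (2 * k + 2)) = 2 * k + 2 :=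
    card_squaresOf ((List.injOn_rotate_of_coprime_count (a := lb) (b := la) (by simp)).mono
      (Set.Iio_subset_Iio (by simp; omega)))
  have hD : #(squaresOf (fun j => la :: baPow j) (k + 1)) = k + 1 :=
    card_squaresOf fun i _ j _ h => by simpa using congrArg List.length h
  have hE₁ : #(squaresOf (fun j => abPow (j + 1)) ((k + 2) / 2)) = (k + 2) / 2 :=
    card_squaresOf fun i _ j _ h => by simpa using congrArg List.length h
  have hE₂ : #(squaresOf (fun j => baPow (j + 1)) ((k + 2) / 2)) = (k + 2) / 2 :=
    card_squaresOf fun i _ j _ h => by simpa using congrArg List.length h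
  have hE : Disjoint (squaresOf (fun j => abPow (j + 1)) ((k + 2) / 2))
      (squaresOf (fun j => baPow (j + 1)) ((k + 2) / 2)) := by
    simp only [squaresOf, disjoint_left, mem_image, mem_range, not_exists, not_and]
    rintro _ ⟨i, -, rfl⟩ j - h
    simp [abPow_succ, baPow_succ, la, lb] at h
  rw [fWordSquares, card_union_of_disjoint, card_union_of_disjoint, card_union_of_disjoint,
    card_union_of_disjoint, card_union_of_disjoint hE]
  · omega
  all_goals
    simp only [disjoint_union_left]
    and_intros <;>
    exact disjoint_squaresOf fun i hi j hj => by
      simp only [List.length_rotate, List.length_cons, List.length_nil, List.length_append,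
        length_baPow, length_abPow, length_xWord]
      omega

theorem ten_mul_add_fifteen_le_ncard_cyclicSquares_fWord (k : ℕ) :
    10 * k + 15 ≤ (cyclicSquares (fWord k)).ncard :=
  calc 10 * k + 15 ≤ #(fWordSquares k) := card_fWordSquares k
    _ = (↑(fWordSquares k) : Set (List Bool)).ncard := (Set.ncard_coe_finset _).symm
    _ ≤ (cyclicSquares (fWord k)).ncard :=
      Set.ncard_le_ncard (fWordSquares_subset k) (cyclicSquares_finite _)

/-- There is an absolute constant `C` such that for every `n₀` there is a word of
length `n ≥ n₀` whose circular word contains at least `1.25n - C` distinct squares. -/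
theorem stmt7 :
    ∃ C : ℝ, ∀ n₀ : ℕ, ∃ n : ℕ, n₀ ≤ n ∧ ∃ w : List Bool, w.length = n ∧
      1.25 * (n : ℝ) - C ≤ ((cyclicSquares w).ncard : ℝ) := by
  refine ⟨5, fun n₀ => ⟨8 * n₀ + 16, by omega, fWord n₀, length_fWord n₀, ?_⟩⟩
  have h : (10 * n₀ + 15 : ℝ) ≤ (cyclicSquares (fWord n₀)).ncard := by
    exact_mod_cast ten_mul_add_fifteen_le_ncard_cyclicSquares_fWord n₀
  push_cast
  linarith
end

section
/- The number of distinct squares occurring as factors of a word of length n is at most 2n. -/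
/-!
Map each distinct square to the start of its rightmost occurrence; at most two squares are mapped
to each position. Indeed, let `uu`, `vv`, `ww` start at the same position with `|u| < |v| < |w|`.
If `2|u| ≤ |w|`, then `uu` is a prefix of `w` and reoccurs `|w|` letters later. Otherwise the
occurrences of `u` at `|u|`, `|v|`, `|w|` make `p = |v| - |u|` and `q = |w| - |v|` periods of `u`
with `p + q < |u|`; by the periodicity lemma the least period `e` of `u` divides `p` and `q`, a
rotation argument shows that it divides `|u|`, and then all of `ww` has period `e`, so `uu`
reoccurs `e` letters later. In both cases the occurrence of `uu` was not the rightmost one.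
-/

namespace List

variable {α : Type*} {u w y : List α} {d e p : ℕ}

theorem hasPeriod_iff_drop_prefix : w.HasPeriod p ↔ w.drop p <+: w := by
  refine ⟨HasPeriod.drop_prefix p, fun h => ?_⟩
  simpa only [HasPeriod, take_append_drop] using (prefix_append_right_inj (w.take p)).2 h

theorem hasPeriod_append_self (u : List α) : (u ++ u).HasPeriod u.length := by
  simp [hasPeriod_iff_drop_prefix]

theorem hasPeriod_of_prefix_of_prefix_drop (h : u <+: y) (hd : u <+: y.drop d) :
    u.HasPeriod d :=
  hasPeriod_iff_drop_prefix.2 (prefix_of_prefix_length_le (h.drop d) hd (by simp))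

theorem IsPrefix.getElem?_eq (h : u <+: w) {i : ℕ} (hi : i < u.length) : u[i]? = w[i]? := by
  rw [getElem?_eq_getElem hi, getElem?_eq_getElem (hi.trans_le h.length_le), h.getElem]

theorem HasPeriod.of_prefix (hw : w.HasPeriod p) (hu : u.HasPeriod e) (huw : u <+: w)
    (hp : 0 < p) (hep : e ∣ p) (hpu : p ≤ u.length) : w.HasPeriod e := by
  have he : 0 < e := Nat.pos_of_dvd_of_pos hep hp
  rw [hasPeriod_iff_forall_getElem?_mod] at hw hu ⊢
  intro i hi
  have hie : i % e < u.length := (Nat.mod_lt i he).trans_le ((Nat.le_of_dvd hp hep).trans hpu)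
  calc w[i]? = w[i % p]? := hw i hi
    _ = u[i % p]? := (huw.getElem?_eq ((Nat.mod_lt i hp).trans_le hpu)).symm
    _ = u[i % e]? := by rw [hu _ ((Nat.mod_lt i hp).trans_le hpu), Nat.mod_mod_of_dvd i hep]
    _ = w[i % e]? := huw.getElem?_eq hie

end List

open List

section MinPeriod

variable {α : Type*} {u w : List α} {p : ℕ}

theorem isPeriod_iff_hasPeriod : IsPeriod w p ↔ 0 < p ∧ w.HasPeriod p := by
  rw [IsPeriod, hasPeriod_iff_getElem?]
  exact and_congr Iff.rfl ⟨fun h i hi => h i (by omega), fun h i hi => h i (by omega)⟩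

theorem minPeriod_pos_and_hasPeriod (hw : w ≠ []) :
    0 < minPeriod w ∧ w.HasPeriod (minPeriod w) :=
  isPeriod_iff_hasPeriod.1 <| Nat.sInf_mem (s := {p | IsPeriod w p})
    ⟨w.length, isPeriod_iff_hasPeriod.2
      ⟨length_pos_iff.2 hw, hasPeriod_of_length_le w _ le_rfl⟩⟩

theorem minPeriod_le (hp0 : 0 < p) (hp : w.HasPeriod p) : minPeriod w ≤ p :=
  Nat.sInf_le (isPeriod_iff_hasPeriod.2 ⟨hp0, hp⟩)

theorem minPeriod_dvd (hw : w ≠ []) (hp : w.HasPeriod p)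
    (hlen : minPeriod w + p ≤ w.length) : minPeriod w ∣ p := by
  obtain ⟨he0, he⟩ := minPeriod_pos_and_hasPeriod hw
  have hle := minPeriod_le (Nat.gcd_pos_of_pos_left p he0) (he.gcd hp (by omega))
  rw [← le_antisymm (Nat.gcd_le_left p he0) hle]
  exact Nat.gcd_dvd_right _ _

/-- With `e` the least period of `u`, the hypothesis makes the block `u.take e` invariant under
rotation by `r = |u| % e`; so `r` is a period of `u`, and minimality of `e` forces `r = 0`. -/
theorem minPeriod_dvd_length (hu : u ≠ [])
    (h : (u ++ u.take (minPeriod u)).HasPeriod (minPeriod u)) : minPeriod u ∣ u.length := by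
  obtain ⟨he0, he⟩ := minPeriod_pos_and_hasPeriod hu
  have hel : minPeriod u ≤ u.length :=
    minPeriod_le (length_pos_iff.2 hu) (hasPeriod_of_length_le u _ le_rfl)
  set e := minPeriod u
  set r := u.length % e
  have hr : u.HasPeriod r := by
    rw [hasPeriod_iff_forall_getElem?_mod] at he h
    rw [hasPeriod_iff_getElem?]
    intro i hi
    have hie : i % e < e := Nat.mod_lt i he0
    have hshift := h (u.length + i % e) (by simp; omega)
    rw [getElem?_append_right (by omega), Nat.add_sub_cancel_left, getElem?_take_of_lt hie,
      getElem?_append_left (by have := Nat.mod_lt (u.length + i % e) he0; omega),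
      Nat.add_mod_mod] at hshift
    calc u[i]? = u[i % e]? := he i (by omega)
      _ = u[(i + r) % e]? := by rw [hshift, Nat.add_mod_mod, Nat.add_comm]
      _ = u[i + r]? := (he _ (by omega)).symm
  by_contra hnd
  exact absurd (minPeriod_le (Nat.pos_of_ne_zero (mt Nat.dvd_of_mod_eq_zero hnd)) hr)
    (not_le.2 (Nat.mod_lt _ he0))

end MinPeriod

section Squares

variable {α : Type*} {u v w y : List α}

theorem IsSq.ne_nil {s : List α} (hs : IsSq s) : s ≠ [] := by
  obtain ⟨u, hu, rfl⟩ := hs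
  simpa using hu

theorem hasPeriod_minPeriod_of_three_square_prefixes (hu : u ≠ []) (huy : u ++ u <+: y)
    (hvy : v ++ v <+: y) (hwy : w ++ w <+: y) (huv : u.length < v.length)
    (hvw : v.length < w.length) (hwu : w.length < 2 * u.length) :
    (w ++ w).HasPeriod (minPeriod u) ∧ minPeriod u ≤ w.length - u.length := by
  obtain ⟨p, hp⟩ := Nat.exists_eq_add_of_le huv.le
  obtain ⟨q, hq⟩ := Nat.exists_eq_add_of_le hvw.le
  have hu_v : u <+: v := prefix_of_prefix_length_le (prefix_append _ _ |>.trans huy)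
    (prefix_append _ _ |>.trans hvy) huv.le
  have hv_w : v <+: w := prefix_of_prefix_length_le (prefix_append _ _ |>.trans hvy)
    (prefix_append _ _ |>.trans hwy) hvw.le
  have hw_uu : w <+: u ++ u := prefix_of_prefix_length_le (prefix_append _ _ |>.trans hwy) huy
    (by simp only [length_append]; omega)
  have hu_a : u <+: y.drop u.length := by simpa using huy.drop u.length
  have hv_b : v <+: y.drop v.length := by simpa using hvy.drop v.length
  have hw_c : w <+: y.drop w.length := by simpa using hwy.drop w.length
  have hu_p : u.HasPeriod p :=
    hasPeriod_of_prefix_of_prefix_drop hu_a (by rw [drop_drop, ← hp]; exact hu_v.trans hv_b)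
  have hu_q : u.HasPeriod q :=
    hasPeriod_of_prefix_of_prefix_drop (hu_v.trans hv_b)
      (by rw [drop_drop, ← hq]; exact (hu_v.trans hv_w).trans hw_c)
  have hv_q : v.HasPeriod q :=
    hasPeriod_of_prefix_of_prefix_drop hv_b (by rw [drop_drop, ← hq]; exact hv_w.trans hw_c)
  obtain ⟨he0, hue⟩ := minPeriod_pos_and_hasPeriod hu
  have hep : minPeriod u ≤ p := minPeriod_le (by omega) hu_p
  have heq : minPeriod u ≤ q := minPeriod_le (by omega) hu_q
  have hdq : minPeriod u ∣ q := minPeriod_dvd hu hu_q (by omega)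
  have hdp : minPeriod u ∣ p := minPeriod_dvd hu hu_p (by omega)
  have hve : v.HasPeriod (minPeriod u) := hv_q.of_prefix hue hu_v (by omega) hdq (by omega)
  have hda : minPeriod u ∣ u.length := by
    refine minPeriod_dvd_length hu (hve.infix (IsPrefix.isInfix ?_))
    have hpre : u ++ u.take (minPeriod u) <+: u ++ u :=
      (prefix_append_right_inj u).2 (take_prefix _ u)
    exact prefix_of_prefix_length_le (hpre.trans huy) (prefix_append _ _ |>.trans hvy)
      (by simp only [length_append, length_take]; omega)
  have huue : (u ++ u).HasPeriod (minPeriod u) :=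
    (hasPeriod_append_self u).of_prefix hue (prefix_append u u) (by omega) hda le_rfl
  refine ⟨(hasPeriod_append_self w).of_prefix (huue.infix hw_uu.isInfix) (prefix_append w w)
    (by omega) ?_ le_rfl, by omega⟩
  rw [hq, hp]
  exact dvd_add (dvd_add hda hdp) hdq

theorem exists_prefix_drop_of_three_square_prefixes (hu : u ≠ []) (huy : u ++ u <+: y)
    (hvy : v ++ v <+: y) (hwy : w ++ w <+: y) (huv : u.length < v.length)
    (hvw : v.length < w.length) : ∃ j, 0 < j ∧ u ++ u <+: y.drop j := by
  by_cases hwu : 2 * u.length ≤ w.length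
  · refine ⟨w.length, by omega, ?_⟩
    have hw_c : w <+: y.drop w.length := by simpa using hwy.drop w.length
    exact (prefix_of_prefix_length_le huy (prefix_append _ _ |>.trans hwy)
      (by simp only [length_append]; omega)).trans hw_c
  · obtain ⟨hper, hle⟩ := hasPeriod_minPeriod_of_three_square_prefixes hu huy hvy hwy huv hvw
      (by omega)
    refine ⟨minPeriod u, (minPeriod_pos_and_hasPeriod hu).1, ?_⟩
    refine (prefix_of_prefix_length_le ?_ (hasPeriod_iff_drop_prefix.1 hper) ?_).trans
      (hwy.drop _)
    · exact prefix_of_prefix_length_le huy hwy (by simp only [length_append]; omega)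
    · simp only [length_drop, length_append]; omega

end Squares

section Occurrences

variable {α : Type*} {r s t x : List α} {i : ℕ}

theorem occursAt_iff_prefix_drop : occursAt s x i ↔ s <+: x.drop i := by
  rw [occursAt, prefix_iff_eq_take, eq_comm]

theorem infix_iff_exists_occursAt : s <:+: x ↔ ∃ i, occursAt s x i := by
  simp only [occursAt_iff_prefix_drop]
  constructor
  · rintro ⟨l, m, rfl⟩
    exact ⟨l.length, by simp⟩
  · rintro ⟨i, h⟩
    exact h.isInfix.trans (drop_suffix i x).isInfix

theorem occursAt.lt_length (hs : s ≠ []) (h : occursAt s x i) : i < x.length := by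
  have hlen := (occursAt_iff_prefix_drop.1 h).length_le
  rw [length_drop] at hlen
  have := length_pos_iff.2 hs
  omega

theorem occursAt.eq_of_length_eq (hs : occursAt s x i) (ht : occursAt t x i)
    (hst : s.length = t.length) : s = t := by
  rw [occursAt] at hs ht
  rw [← hs, ← ht, hst]

theorem exists_rightmostStartsAt (hs : s ≠ []) (h : s <:+: x) :
    ∃ i, rightmostStartsAt s x i := by
  classical
  obtain ⟨i, hi⟩ := infix_iff_exists_occursAt.1 h
  exact ⟨_, Nat.findGreatest_spec (hi.lt_length hs).le hi,
    fun j hj => Nat.le_findGreatest (hj.lt_length hs).le hj⟩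

theorem not_rightmostStartsAt_of_longer_squares (hr : IsSq r) (hs : IsSq s) (ht : IsSq t)
    (hsi : occursAt s x i) (hti : occursAt t x i) (hrs : r.length < s.length)
    (hst : s.length < t.length) : ¬ rightmostStartsAt r x i := by
  rintro ⟨hri, hmax⟩
  obtain ⟨u, hu, rfl⟩ := hr
  obtain ⟨v, -, rfl⟩ := hs
  obtain ⟨w, -, rfl⟩ := ht
  simp only [length_append] at hrs hst
  obtain ⟨j, hj, hdrop⟩ := exists_prefix_drop_of_three_square_prefixes hu
    (occursAt_iff_prefix_drop.1 hri) (occursAt_iff_prefix_drop.1 hsi)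
    (occursAt_iff_prefix_drop.1 hti) (by omega) (by omega)
  have := hmax (i + j) (occursAt_iff_prefix_drop.2 (by rwa [← drop_drop]))
  omega

end Occurrences

theorem Set.ncard_le_two_mul_of_no_three_sizes {β : Type*} {S : Set β} {n : ℕ}
    (R len : β → ℕ) (hR : ∀ s ∈ S, R s < n)
    (hinj : ∀ s ∈ S, ∀ t ∈ S, R s = R t → len s = len t → s = t)
    (hthree : ∀ r ∈ S, ∀ s ∈ S, ∀ t ∈ S, R r = R s → R s = R t → len r < len s →
      len s < len t → False) :
    S.ncard ≤ 2 * n := by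
  classical
  -- `R`, together with the flag "some shorter element shares the key", is injective on `S`
  let φ : β → ℕ × Bool := fun s => (R s, decide (∃ r ∈ S, R r = R s ∧ len r < len s))
  have hφ : ∀ s ∈ S, ∀ t ∈ S, φ s = φ t → len s < len t → False := by
    intro s hs t ht hst hlt
    simp only [φ, Prod.mk.injEq] at hst
    obtain ⟨hR', htag⟩ := hst
    obtain ⟨r, hr, hrs, hlr⟩ :=
      of_decide_eq_true (htag.trans (decide_eq_true ⟨s, hs, hR', hlt⟩))
    exact hthree r hr s hs t ht hrs hR' hlr hlt
  calc S.ncard ≤ (Finset.range n ×ˢ (Finset.univ : Finset Bool) : Set (ℕ × Bool)).ncard := by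
        refine Set.ncard_le_ncard_of_injOn φ
          (fun s hs => ⟨Finset.mem_range.2 (hR s hs), Finset.mem_univ _⟩) ?_
        intro s hs t ht hst
        rcases lt_trichotomy (len s) (len t) with h | h | h
        · exact (hφ s hs t ht hst h).elim
        · exact hinj s hs t ht (congrArg Prod.fst hst) h
        · exact (hφ t ht s hs hst.symm h).elim
    _ = 2 * n := by simp [mul_comm]

/-- A word of length `n` contains at most `2n` distinct squares. -/
theorem stmt9 {α : Type*} (x : List α) :
    {s | IsSq s ∧ s <:+: x}.ncard ≤ 2 * x.length := by
  choose! R hR using fun s (hs : IsSq s ∧ s <:+: x) => exists_rightmostStartsAt hs.1.ne_nil hs.2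
  refine Set.ncard_le_two_mul_of_no_three_sizes R length
    (fun s hs => (hR s hs).1.lt_length hs.1.ne_nil)
    (fun s hs t ht hst hlen => (hR s hs).1.eq_of_length_eq (hst ▸ (hR t ht).1) hlen) ?_
  intro r hr s hs t ht hrs hst hlr hlt
  exact not_rightmostStartsAt_of_longer_squares hr.1 hs.1 ht.1 (hrs ▸ (hR s hs).1)
    (hrs ▸ hst ▸ (hR t ht).1) hlr hlt (hR r hr)
end

section
/- If every factor of length m of a word v is periodic (smallest period at most m/2), then all these factors have the same smallest period d, and d is a period of the whole word v. -/
/-!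
If `a :: t` and `t ++ [b]` are both periodic with smallest periods `p ≠ q`, then `p` and `q`
are periods of `t` with `p + q ≤ |t|`, so `gcd p q` is a period of `t` (weak Fine–Wilf).
Since it divides `p ≤ |t|` and `q ≤ |t|`, it extends to both words, which forces
`p = gcd p q = q`. Sliding a window of length `m` across `v`, all factors of length `m` share
one smallest period `d`; as `2d ≤ m`, any two positions of `v` at distance `d` lie in a common
window, so `d` is a period of `v`.
-/

namespace IsPeriod

variable {α : Type*} {w s : List α} {p q : ℕ}

theorem getElem?_add_mul (h : IsPeriod w p) (k i : ℕ) (hi : i + p * k < w.length) :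
    w[i]? = w[i + p * k]? := by
  induction k generalizing i with
  | zero => simp
  | succ k ih =>
    rw [h.2 i (by nlinarith), ih (i + p) (by rw [Nat.mul_succ] at hi; omega), Nat.mul_succ,
      Nat.add_comm (p * k) p, Nat.add_assoc]

theorem of_infix (hw : IsPeriod w p) (hs : s <:+: w) : IsPeriod s p := by
  obtain ⟨k, hk, hget⟩ := List.infix_iff_getElem?.mp hs
  have hshift : ∀ i (hi : i < s.length), s[i]? = w[i + k]? := fun i hi => by
    rw [hget i hi, List.getElem?_eq_getElem hi]
  refine ⟨hw.1, fun i hi => ?_⟩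
  rw [hshift i (by omega), hshift (i + p) hi, hw.2 (i + k) (by omega), Nat.add_right_comm]

theorem reverse (h : IsPeriod w p) : IsPeriod w.reverse p := by
  refine ⟨h.1, fun i hi => ?_⟩
  rw [List.length_reverse] at hi
  rw [List.getElem?_reverse (by omega), List.getElem?_reverse (by omega),
    h.2 (w.length - 1 - (i + p)) (by omega)]
  congr 1
  omega

theorem sub (hp : IsPeriod w p) (hq : IsPeriod w q) (hqp : q < p) (hlen : p + q ≤ w.length) :
    IsPeriod w (p - q) := by
  refine ⟨by omega, fun i hi => ?_⟩
  by_cases hip : i + p < w.length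
  · rw [hp.2 i hip, hq.2 (i + (p - q)) (by omega)]
    congr 1
    omega
  · have h₁ := hq.2 (i - q) (by omega)
    have h₂ := hp.2 (i - q) (by omega)
    rw [Nat.sub_add_cancel (by omega : q ≤ i)] at h₁
    rw [← h₁, h₂]
    congr 1
    omega

/-- Weak form of the Fine–Wilf theorem. -/
theorem gcd {p q : ℕ} (hp : IsPeriod w p) (hq : IsPeriod w q) (hlen : p + q ≤ w.length) :
    IsPeriod w (p.gcd q) := by
  have := hp.1
  have := hq.1
  rcases lt_trichotomy p q with hpq | rfl | hqp
  · have h := (hq.sub hp hpq (by omega)).gcd hp (by omega)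
    rwa [Nat.gcd_sub_self_left hpq.le, Nat.gcd_comm] at h
  · rwa [Nat.gcd_self]
  · have h := (hp.sub hq hqp (by omega)).gcd hq (by omega)
    rwa [Nat.gcd_sub_self_left hqp.le] at h
termination_by p + q

theorem cons {a : α} {l : List α} (hl : IsPeriod l p)
    (h₀ : p < l.length + 1 → (a :: l)[0]? = (a :: l)[p]?) : IsPeriod (a :: l) p := by
  refine ⟨hl.1, fun i hi => ?_⟩
  cases i with
  | zero => simpa using h₀ (by simpa using hi)
  | succ j =>
    rw [Nat.add_right_comm, List.getElem?_cons_succ, List.getElem?_cons_succ]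
    exact hl.2 j (by simp at hi; omega)

theorem cons_of_dvd {a : α} {t : List α} {g : ℕ} (hp : IsPeriod (a :: t) p)
    (hg : IsPeriod t g) (hgp : g ∣ p) (hpt : p ≤ t.length) : IsPeriod (a :: t) g := by
  obtain ⟨_ | k, rfl⟩ := hgp
  · exact absurd hp.1 (by simp)
  refine hg.cons fun _ => ?_
  -- `a = t[p - 1] = t[g - 1]`, the second step because `g ∣ p`
  have hg₁ := hg.1
  have h₀ := hp.2 0 (by simp; omega)
  have e₁ : 0 + g * (k + 1) = g - 1 + g * k + 1 := by rw [Nat.mul_succ]; omega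
  have e₂ : g = g - 1 + 1 := by omega
  rw [e₁, List.getElem?_cons_succ,
    ← hg.getElem?_add_mul k (g - 1) (by rw [Nat.mul_succ] at hpt; omega)] at h₀
  rw [h₀, e₂, List.getElem?_cons_succ, Nat.add_sub_cancel]

theorem concat_of_dvd {b : α} {t : List α} {g : ℕ} (hq : IsPeriod (t ++ [b]) q)
    (hg : IsPeriod t g) (hgq : g ∣ q) (hqt : q ≤ t.length) : IsPeriod (t ++ [b]) g := by
  have h := hq.reverse
  rw [List.reverse_append, List.reverse_singleton, List.singleton_append] at h
  have h' := (h.cons_of_dvd hg.reverse hgq (by simpa using hqt)).reverse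
  rwa [← List.singleton_append, ← List.reverse_singleton, ← List.reverse_append,
    List.reverse_reverse] at h'

end IsPeriod

section MinPeriod

variable {α : Type*}

theorem isPeriod_length_add_one (w : List α) : IsPeriod w (w.length + 1) :=
  ⟨by omega, fun i hi => by omega⟩

/-- Every word has a period, so `minPeriod` never takes the junk value `sInf ∅ = 0`. -/
theorem isPeriod_minPeriod (w : List α) : IsPeriod w (minPeriod w) :=
  Nat.sInf_mem (s := {p | IsPeriod w p}) ⟨_, isPeriod_length_add_one w⟩

theorem minPeriod_le_s12 {w : List α} {p : ℕ} (h : IsPeriod w p) : minPeriod w ≤ p :=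
  Nat.sInf_le h

theorem minPeriod_cons_eq_minPeriod_concat {a b : α} {t : List α} (h₁ : Periodic (a :: t))
    (h₂ : Periodic (t ++ [b])) : minPeriod (a :: t) = minPeriod (t ++ [b]) := by
  set p := minPeriod (a :: t)
  set q := minPeriod (t ++ [b])
  have hp : IsPeriod (a :: t) p := isPeriod_minPeriod _
  have hq : IsPeriod (t ++ [b]) q := isPeriod_minPeriod _
  have := hp.1
  have := hq.1
  rw [Periodic, List.length_cons] at h₁
  rw [Periodic, List.length_append, List.length_singleton] at h₂
  obtain hpq | hsum : p = q ∨ p + q ≤ t.length := by omega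
  · exact hpq
  have hg : IsPeriod t (p.gcd q) :=
    (hp.of_infix (List.suffix_cons a t).isInfix).gcd
      (hq.of_infix (List.prefix_append t [b]).isInfix) hsum
  have hpg : p ≤ p.gcd q := minPeriod_le_s12 (hp.cons_of_dvd hg (Nat.gcd_dvd_left p q) (by omega))
  have hqg : q ≤ p.gcd q := minPeriod_le_s12 (hq.concat_of_dvd hg (Nat.gcd_dvd_right p q) (by omega))
  have := Nat.gcd_le_left q (by omega : 0 < p)
  have := Nat.gcd_le_right p (by omega : 0 < q)
  omega

theorem minPeriod_eq_minPeriod_take {v s : List α} {m : ℕ}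
    (h : ∀ s : List α, s <:+: v → s.length = m → Periodic s) (hs : s <:+: v)
    (hsm : s.length = m) : minPeriod s = minPeriod (v.take m) := by
  induction v generalizing s with
  | nil => rw [List.eq_nil_of_infix_nil hs]; simp
  | cons a v ih =>
    rcases List.infix_cons_iff.mp hs with hpre | hinf
    · rw [List.prefix_iff_eq_take.mp hpre, hsm]
    have hv : m ≤ v.length := hsm ▸ hinf.length_le
    rw [ih (fun s' hs' => h s' (List.infix_cons hs')) hinf hsm]
    obtain _ | k := m
    · rfl
    have hk : k < v.length := hv
    have h₁ : Periodic (a :: v.take k) :=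
      h _ (List.take_prefix (k + 1) (a :: v)).isInfix (by simp; omega)
    have h₂ : Periodic (v.take k ++ [v[k]]) := by
      rw [List.take_concat_get' v k hk]
      exact h _ ((List.take_prefix _ v).isInfix.trans (List.suffix_cons a v).isInfix)
        (by simp; omega)
    rw [List.take_succ_cons, ← List.take_concat_get' v k hk]
    exact (minPeriod_cons_eq_minPeriod_concat h₁ h₂).symm

theorem isPeriod_of_forall_infix {v : List α} {m d : ℕ} (hdm : d < m) (hmv : m ≤ v.length)
    (h : ∀ s : List α, s <:+: v → s.length = m → IsPeriod s d) : IsPeriod v d := by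
  induction v with
  | nil => simp at hmv; omega
  | cons a v ih =>
    by_cases hm : m ≤ v.length
    · have hpre := h _ (List.take_prefix m (a :: v)).isInfix (by simp; omega)
      refine (ih hm fun s hs => h s (List.infix_cons hs)).cons fun _ => ?_
      have h₀ := hpre.2 0 (by simp; omega)
      rwa [Nat.zero_add, List.getElem?_take_of_lt (by omega),
        List.getElem?_take_of_lt (by omega)] at h₀
    · exact h _ (List.infix_refl _) (by simp at hmv ⊢; omega)

end MinPeriod

theorem stmt12_general {α : Type*} (v : List α) (m : ℕ) (hv : m ≤ v.length)
    (h : ∀ s : List α, s <:+: v → s.length = m → Periodic s) :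
    ∃ d : ℕ, (∀ s : List α, s <:+: v → s.length = m → minPeriod s = d) ∧
      IsPeriod v d := by
  have hsame : ∀ s : List α, s <:+: v → s.length = m → minPeriod s = minPeriod (v.take m) :=
    fun _ => minPeriod_eq_minPeriod_take h
  refine ⟨minPeriod (v.take m), hsame, isPeriod_of_forall_infix ?_ hv fun s hs hsm => ?_⟩
  · have hprefix := h _ (List.take_prefix m v).isInfix (by simp; omega)
    have := (isPeriod_minPeriod (v.take m)).1
    simp only [Periodic, List.length_take] at hprefix
    omega
  · rw [← hsame s hs hsm]
    exact isPeriod_minPeriod s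

/-- If every factor of length `m` of `v` is periodic, then all these factors share the
same smallest period `d`, and `d` is a period of `v`. -/
theorem stmt12 {α : Type*} (v : List α) (m : ℕ) (hm : 2 ≤ m) (hv : m ≤ v.length)
    (h : ∀ s : List α, s <:+: v → s.length = m → Periodic s) :
    ∃ d : ℕ, (∀ s : List α, s <:+: v → s.length = m → minPeriod s = d) ∧
      IsPeriod v d :=
  stmt12_general v m hv h
end
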